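/- (Lemma 1 of the paper.) Under Assumption 1, for each i = 1, …, n: if X_i β ≥ 0 then E[2Y_i − 1] ≥ 0, and if X_i β ≤ 0 then E[2Y_i − 1] ≤ 0. -/

import Mathlib

open MeasureTheory ProbabilityTheory

lemma integral_two_mul_indicator_one_sub_one {Ω : Type*} [MeasurableSpace Ω] (P : Measure Ω)
    [IsProbabilityMeasure P] {A : Set Ω} (hA : MeasurableSet A) :
    ∫ ω, (2 * A.indicator 1 ω - 1) ∂P = 2 * P.real A - 1 := by
  have hint : Integrable (A.indicator (1 : Ω → ℝ)) P :=
    (integrable_indicator_iff hA).2 (integrableOn_const (measure_ne_top _ _))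
  rw [integral_sub (hint.const_mul 2) (integrable_const 1), integral_const_mul,
    integral_indicator_one hA]
  simp

theorem lemma1_conditional_moment_inequalities
    {Ω : Type*} [MeasurableSpace Ω] (P : Measure Ω) [IsProbabilityMeasure P]
    {n K : ℕ}
    (X : Fin n → Fin K → ℝ) (β : Fin K → ℝ)
    (U : Fin n → Ω → ℝ) (hU : ∀ i, Measurable (U i))
    (Y : Fin n → Ω → ℝ)
    (hY : ∀ i ω, Y i ω = if 0 ≤ (∑ j, X i j * β j) + U i ω then 1 else 0)
    (hmed : ∀ i, P {ω | 0 ≤ U i ω} = 1/2)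
    (i : Fin n) :
    (0 ≤ (∑ j, X i j * β j) → 0 ≤ ∫ ω, (2 * Y i ω - 1) ∂P) ∧
    ((∑ j, X i j * β j) ≤ 0 → ∫ ω, (2 * Y i ω - 1) ∂P ≤ 0) := by
  set c := ∑ j, X i j * β j
  set A : Set Ω := {ω | 0 ≤ c + U i ω}
  have hA : MeasurableSet A := measurableSet_le measurable_const (measurable_const.add (hU i))
  have hYA : Y i = A.indicator 1 := funext fun ω => by simp [hY, Set.indicator_apply, A, c]
  have hmedian : P.real {ω | 0 ≤ U i ω} = 1 / 2 := by simp [measureReal_def, hmed i]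
  rw [hYA, integral_two_mul_indicator_one_sub_one P hA]
  constructor
  · intro hc
    have : P.real {ω | 0 ≤ U i ω} ≤ P.real A :=
      measureReal_mono fun ω (hω : 0 ≤ U i ω) => add_nonneg hc hω
    linarith
  · intro hc
    have : P.real A ≤ P.real {ω | 0 ≤ U i ω} :=
      measureReal_mono fun ω (hω : 0 ≤ c + U i ω) => show 0 ≤ U i ω by linarith
    linarith
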